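/- arXiv:2510.04299 — 2 statements merged into one kernel-verified Lean document; each statement's English description precedes it below -/
import Mathlib

section
/- Let F : ℝ → [0,1] be a continuous cumulative distribution function, and let (F_n) be a random sequence of cumulative distribution functions such that for every t ∈ ℝ, F_n(t) → F(t) in probability as n → ∞. Then sup_{t ∈ ℝ} |F_n(t) − F(t)| → 0 in probability as n → ∞. -/
/-!
Continuity of `F` lets us pick points `t_j` with `F t_j = j / N`; between consecutive ones `F`
rises by `1 / N`. For a monotone `G` with values in `[0, 1]`, sandwiching `x` between such points
gives `sup |G - F| ≤ max_j |G t_j - F t_j| + 1 / N`, and a maximum over finitely many points tends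
to `0` in probability by a union bound.
-/

open MeasureTheory Filter Topology

lemma Monotone.mem_Icc_of_tendsto {F : ℝ → ℝ} (hF : Monotone F)
    (hF0 : Tendsto F atBot (𝓝 0)) (hF1 : Tendsto F atTop (𝓝 1)) (x : ℝ) :
    F x ∈ Set.Icc (0 : ℝ) 1 :=
  ⟨hF.le_of_tendsto hF0 x, hF.ge_of_tendsto hF1 x⟩

lemma Ioo_subset_range_of_tendsto {F : ℝ → ℝ} (hF : Continuous F)
    (hF0 : Tendsto F atBot (𝓝 0)) (hF1 : Tendsto F atTop (𝓝 1)) :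
    Set.Ioo (0 : ℝ) 1 ⊆ Set.range F := fun _ hv =>
  mem_range_of_exists_le_of_exists_ge hF (hF0.eventually (ge_mem_nhds hv.1)).exists
    (hF1.eventually (le_mem_nhds hv.2)).exists

lemma le_one_div_or_exists_nat_div_lt {N : ℕ} (hN : 0 < N) {v : ℝ} (hv : v ∈ Set.Icc (0 : ℝ) 1) :
    v ≤ 1 / N ∨ ∃ j ∈ Finset.Ioo 0 N, (j : ℝ) / N < v ∧ v - j / N ≤ 1 / N := by
  have hN' : (0 : ℝ) < N := Nat.cast_pos.mpr hN
  set k := ⌈N * v⌉₊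
  have hk_lt : (k : ℝ) < N * v + 1 := Nat.ceil_lt_add_one (by nlinarith [hv.1])
  have hk_ge : N * v ≤ k := Nat.le_ceil _
  have hkN : k ≤ N := Nat.ceil_le.mpr (by nlinarith [hv.2])
  rcases le_or_gt k 1 with hk | hk
  · left
    rw [le_div_iff₀ hN']
    have : (k : ℝ) ≤ 1 := by exact_mod_cast hk
    linarith
  · right
    refine ⟨k - 1, Finset.mem_Ioo.mpr ⟨by omega, by omega⟩, ?_, ?_⟩
    · rw [div_lt_iff₀ hN', Nat.cast_sub hk.le]
      push_cast
      linarith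
    · rw [sub_le_iff_le_add, ← add_div, le_div_iff₀ hN', Nat.cast_sub hk.le]
      push_cast
      linarith

lemma one_sub_le_one_div_or_exists_lt_nat_div {N : ℕ} (hN : 0 < N) {v : ℝ} (hv : 0 ≤ v) :
    1 - v ≤ 1 / N ∨ ∃ j ∈ Finset.Ioo 0 N, v < (j : ℝ) / N ∧ j / N - v ≤ 1 / N := by
  have hN' : (0 : ℝ) < N := Nat.cast_pos.mpr hN
  set k := ⌊N * v⌋₊ + 1
  have hk_gt : N * v < k := by simpa [k] using Nat.lt_floor_add_one (N * v)
  have hk_le : (k : ℝ) ≤ N * v + 1 := by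
    simpa [k] using Nat.floor_le (show 0 ≤ N * v by positivity)
  rcases le_or_gt N k with hk | hk
  · left
    rw [sub_le_comm, one_sub_div hN'.ne', div_le_iff₀ hN']
    have : (N : ℝ) ≤ k := by exact_mod_cast hk
    nlinarith
  · right
    refine ⟨k, Finset.mem_Ioo.mpr ⟨by omega, hk⟩, ?_, ?_⟩
    · rw [lt_div_iff₀ hN']
      linarith
    · rw [sub_le_iff_le_add, div_le_iff₀ hN', add_mul, div_mul_cancel₀ _ hN'.ne']
      linarith

/-- Points of `T`, together with `±∞` (where `F` has the limits `0` and `1`), bracket every `x`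
up to `η` in `F`-value. -/
def IsBracketingNet (F : ℝ → ℝ) (η : ℝ) (T : Set ℝ) : Prop :=
  ∀ x, (F x ≤ η ∨ ∃ a ∈ T, a ≤ x ∧ F x - F a ≤ η) ∧
    (1 - F x ≤ η ∨ ∃ b ∈ T, x ≤ b ∧ F b - F x ≤ η)

lemma exists_finset_isBracketingNet {F : ℝ → ℝ} (hFcont : Continuous F) (hFmono : Monotone F)
    (hF0 : Tendsto F atBot (𝓝 0)) (hF1 : Tendsto F atTop (𝓝 1)) {η : ℝ} (hη : 0 < η) :
    ∃ T : Finset ℝ, IsBracketingNet F η T := by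
  obtain ⟨N, hN⟩ := exists_nat_one_div_lt hη
  have hN₀ : 0 < N + 1 := N.succ_pos
  set t : ℕ → ℝ := fun j => Function.invFun F (j / (N + 1 : ℕ))
  have ht : ∀ j ∈ Finset.Ioo 0 (N + 1), F (t j) = j / (N + 1 : ℕ) := by
    intro j hj
    obtain ⟨hj0, hjN⟩ := Finset.mem_Ioo.mp hj
    refine Function.invFun_eq (Ioo_subset_range_of_tendsto hFcont hF0 hF1 ⟨?_, ?_⟩)
    · positivity
    · rw [div_lt_one (by positivity)]
      exact_mod_cast hjN
  have hN' : 1 / ((N + 1 : ℕ) : ℝ) ≤ η := by push_cast; exact hN.le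
  -- The levels are compared strictly with `F x`, so `t j` lies on the correct side of `x` even
  -- where `F` is flat.
  refine ⟨(Finset.Ioo 0 (N + 1)).image t, fun x => ⟨?_, ?_⟩⟩
  · refine (le_one_div_or_exists_nat_div_lt hN₀ (hFmono.mem_Icc_of_tendsto hF0 hF1 x)).imp
      hN'.trans' ?_
    rintro ⟨j, hj, hlt, hle⟩
    rw [← ht j hj] at hlt hle
    exact ⟨t j, Finset.mem_image_of_mem t hj, (hFmono.reflect_lt hlt).le, hle.trans hN'⟩
  · refine (one_sub_le_one_div_or_exists_lt_nat_div hN₀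
      (hFmono.mem_Icc_of_tendsto hF0 hF1 x).1).imp hN'.trans' ?_
    rintro ⟨j, hj, hlt, hle⟩
    rw [← ht j hj] at hlt hle
    exact ⟨t j, Finset.mem_image_of_mem t hj, (hFmono.reflect_lt hlt).le, hle.trans hN'⟩

lemma IsBracketingNet.abs_sub_le {F G : ℝ → ℝ} {η δ : ℝ} {T : Set ℝ}
    (hT : IsBracketingNet F η T) (hGmono : Monotone G)
    (hG : ∀ x, G x ∈ Set.Icc (0 : ℝ) 1) (hδ : 0 ≤ δ) (hGF : ∀ t ∈ T, |G t - F t| ≤ δ) (x : ℝ) :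
    |G x - F x| ≤ δ + η := by
  obtain ⟨hlow, hup⟩ := hT x
  rw [abs_sub_le_iff]
  constructor
  · rcases hup with h | ⟨b, hb, hxb, hFb⟩
    · linarith [(hG x).2]
    · linarith [hGmono hxb, (abs_sub_le_iff.mp (hGF b hb)).1]
  · rcases hlow with h | ⟨a, ha, hax, hFa⟩
    · linarith [(hG x).1]
    · linarith [hGmono hax, (abs_sub_le_iff.mp (hGF a ha)).2]

lemma IsBracketingNet.iSup_abs_sub_le {F G : ℝ → ℝ} {η δ : ℝ} {T : Set ℝ}
    (hT : IsBracketingNet F η T) (hη : 0 ≤ η) (hGmono : Monotone G)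
    (hG : ∀ x, G x ∈ Set.Icc (0 : ℝ) 1) (hδ : 0 ≤ δ) (hGF : ∀ t ∈ T, |G t - F t| ≤ δ) :
    ⨆ x, |G x - F x| ≤ δ + η :=
  Real.iSup_le (hT.abs_sub_le hGmono hG hδ hGF) (add_nonneg hδ hη)

theorem polya_in_probability_general
    {Ω : Type*} [MeasurableSpace Ω] (μ : Measure Ω) [IsProbabilityMeasure μ]
    (F : ℝ → ℝ)
    (hFcont : Continuous F) (hFmono : Monotone F)
    (hF0 : Tendsto F atBot (𝓝 0)) (hF1 : Tendsto F atTop (𝓝 1))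
    (Fn : ℕ → Ω → ℝ → ℝ)
    (hFn_mono : ∀ n ω, Monotone (Fn n ω))
    (hFn_range : ∀ n ω t, Fn n ω t ∈ Set.Icc (0:ℝ) 1)
    (hptwise : ∀ t : ℝ, TendstoInMeasure μ (fun n ω => Fn n ω t) atTop (fun _ => F t)) :
    TendstoInMeasure μ (fun n ω => ⨆ t : ℝ, |Fn n ω t - F t|) atTop (fun _ => (0:ℝ)) := by
  rw [tendstoInMeasure_iff_dist]
  intro ε hε
  have hε3 : 0 < ε / 3 := by positivity
  obtain ⟨T, hT⟩ := exists_finset_isBracketingNet hFcont hFmono hF0 hF1 hε3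
  have hbad : ∀ n, {ω | ε ≤ dist (⨆ t, |Fn n ω t - F t|) 0} ⊆
      ⋃ t ∈ T, {ω | ε / 3 ≤ dist (Fn n ω t) (F t)} := by
    intro n ω hω
    by_contra hgood
    simp only [Set.mem_iUnion, Set.mem_ofPred_eq, not_exists, not_le, Real.dist_eq] at hgood
    have hsup := hT.iSup_abs_sub_le hε3.le (hFn_mono n ω) (hFn_range n ω) hε3.le
      fun t ht => (hgood t ht).le
    rw [Set.mem_ofPred_eq, dist_zero_right, Real.norm_of_nonneg
      (Real.iSup_nonneg fun t => abs_nonneg _)] at hω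
    linarith
  have hsum : Tendsto (fun n => ∑ t ∈ T, μ {ω | ε / 3 ≤ dist (Fn n ω t) (F t)}) atTop (𝓝 0) := by
    simpa using tendsto_finsetSum T fun t _ => tendstoInMeasure_iff_dist.mp (hptwise t) _ hε3
  exact tendsto_of_tendsto_of_tendsto_of_le_of_le tendsto_const_nhds hsum (fun _ => zero_le)
    fun n => (measure_mono (hbad n)).trans (measure_biUnion_finset_le _ _)

/-- In-probability version of Polya's theorem: if a random sequence of CDFs converges
pointwise in probability to a continuous CDF, it converges uniformly in probability. -/
theorem polya_in_probability
    {Ω : Type*} [MeasurableSpace Ω] (μ : Measure Ω) [IsProbabilityMeasure μ]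
    (F : ℝ → ℝ)
    (hFcont : Continuous F) (hFmono : Monotone F)
    (hF0 : Tendsto F atBot (𝓝 0)) (hF1 : Tendsto F atTop (𝓝 1))
    (Fn : ℕ → Ω → ℝ → ℝ)
    (hFn_mono : ∀ n ω, Monotone (Fn n ω))
    (hFn_range : ∀ n ω t, Fn n ω t ∈ Set.Icc (0:ℝ) 1)
    (hFn_rc : ∀ n ω t, ContinuousWithinAt (Fn n ω) (Set.Ici t) t)
    (hFn_bot : ∀ n ω, Tendsto (Fn n ω) atBot (𝓝 0))
    (hFn_top : ∀ n ω, Tendsto (Fn n ω) atTop (𝓝 1))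
    (hFn_meas : ∀ n t, Measurable fun ω => Fn n ω t)
    (hptwise : ∀ t : ℝ, TendstoInMeasure μ (fun n ω => Fn n ω t) atTop (fun _ => F t)) :
    TendstoInMeasure μ (fun n ω => ⨆ t : ℝ, |Fn n ω t - F t|) atTop (fun _ => (0:ℝ)) :=
  polya_in_probability_general μ F hFcont hFmono hF0 hF1 Fn hFn_mono hFn_range hptwise
end

section
/- Let (R̂ⁿ_1, …, R̂ⁿ_n), n ≥ 1, be triangular arrays of identically distributed (not necessarily independent) real random variables, and let F_R be a continuous CDF. Suppose that for every t ∈ ℝ, P(R̂ⁿ_1 ≤ t) → F_R(t) and P(R̂ⁿ_1 ≤ t, R̂ⁿ_2 ≤ t) → F_R(t)² as n → ∞. Then the empirical distribution function F_n(t) = n⁻¹ Σ_{i=1}^n 1{R̂ⁿ_i ≤ t} satisfies sup_{t ∈ ℝ} |F_n(t) − F_R(t)| → 0 in probability. -/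
/-!
For fixed `t`, the indicators `1{R̂ⁿᵢ ≤ t}` have common mean `pₙ → F t` and pairwise common
second moment `qₙ → F t ^ 2`, so `E[(Fₙ t - F t)²] = pₙ/n + (1 - 1/n) qₙ - 2 F t pₙ + F t ²`
tends to `0` and `Fₙ t → F t` in probability by Chebyshev. Since `F` is a continuous CDF it
takes every level `j/m`, `0 < j < m`, at some `gⱼ`; by monotonicity of `Fₙ` and `F`,
`sup_t |Fₙ t - F t| ≤ max_j |Fₙ gⱼ - F gⱼ| + 1/m`, which transfers convergence in probability
from the finite grid to the supremum.
-/

open MeasureTheory Filter Topology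

lemma sub_le_of_grid {G F : ℝ → ℝ} (hG : Monotone G) (hG1 : ∀ t, G t ≤ 1) (hF : Monotone F)
    {m : ℕ} (hm : 0 < m) {g : ℕ → ℝ} (hg : ∀ j, 0 < j → j < m → F (g j) = j / m)
    {δ : ℝ} (hδ : 0 ≤ δ) (hGg : ∀ j, 0 < j → j < m → G (g j) - F (g j) ≤ δ) (t : ℝ)
    (hFt : 0 ≤ F t) : G t - F t ≤ δ + 1 / m := by
  have hm' : (0 : ℝ) < m := Nat.cast_pos.mpr hm
  by_cases htop : (m : ℝ) - 1 ≤ m * F t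
  · have : 1 - 1 / m ≤ F t := by rw [sub_le_comm, le_div_iff₀ hm']; linarith
    linarith [hG1 t]
  set j := ⌊m * F t⌋₊ + 1
  have hj_gt : m * F t < j := by push_cast [j]; exact Nat.lt_floor_add_one _
  have hj_le : (j : ℝ) ≤ m * F t + 1 := by
    push_cast [j]; linarith [Nat.floor_le (mul_nonneg hm'.le hFt)]
  have hj0 : 0 < j := Nat.succ_pos _
  have hjm : j < m := by exact_mod_cast (show (j : ℝ) < m by linarith)
  have hgj : F (g j) = j / m := hg j hj0 hjm
  have ht : t ≤ g j := by
    by_contra! h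
    have := hF h.le
    rw [hgj, div_le_iff₀ hm'] at this
    linarith
  have : (j : ℝ) / m ≤ F t + 1 / m := by
    rw [← sub_le_iff_le_add, ← sub_div, div_le_iff₀ hm']; linarith
  linarith [hG ht, hGg j hj0 hjm]

lemma sub_le_of_grid' {G F : ℝ → ℝ} (hG : Monotone G) (hG0 : ∀ t, 0 ≤ G t) (hF : Monotone F)
    {m : ℕ} (hm : 0 < m) {g : ℕ → ℝ} (hg : ∀ j, 0 < j → j < m → F (g j) = j / m)
    {δ : ℝ} (hδ : 0 ≤ δ) (hGg : ∀ j, 0 < j → j < m → F (g j) - G (g j) ≤ δ) (t : ℝ)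
    (hFt : F t ≤ 1) : F t - G t ≤ δ + 1 / m := by
  have hm' : (0 : ℝ) < m := Nat.cast_pos.mpr hm
  by_cases hbot : m * F t ≤ 1
  · have : F t ≤ 1 / m := by rw [le_div_iff₀ hm']; linarith
    linarith [hG0 t]
  obtain ⟨j, hj⟩ : ∃ j, ⌈m * F t⌉₊ = j + 1 :=
    Nat.exists_eq_add_one.mpr (Nat.ceil_pos.mpr (by linarith))
  have hceil_gt : 1 < ⌈m * F t⌉₊ := Nat.lt_ceil.mpr (by push_cast; linarith)
  have hj0 : 0 < j := by omega
  have hj_lt : (j : ℝ) < m * F t := by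
    have := Nat.ceil_lt_add_one (show 0 ≤ (m : ℝ) * F t by linarith)
    rw [hj] at this; push_cast at this; linarith
  have hj_ge : m * F t ≤ j + 1 := by
    have := Nat.le_ceil ((m : ℝ) * F t); rw [hj] at this; push_cast at this; linarith
  have hjm : j < m := by exact_mod_cast (show (j : ℝ) < m by nlinarith)
  have hgj : F (g j) = j / m := hg j hj0 hjm
  have ht : g j ≤ t := by
    by_contra! h
    have := hF h.le
    rw [hgj, le_div_iff₀ hm'] at this
    linarith
  have : F t - 1 / m ≤ (j : ℝ) / m := by
    rw [sub_le_iff_le_add, ← add_div, le_div_iff₀ hm']; linarith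
  linarith [hG ht, hGg j hj0 hjm]

lemma abs_sub_le_of_grid {G F : ℝ → ℝ} (hG : Monotone G) (hG01 : ∀ t, G t ∈ Set.Icc 0 1)
    (hF : Monotone F) (hF01 : ∀ t, F t ∈ Set.Icc 0 1)
    {m : ℕ} (hm : 0 < m) {g : ℕ → ℝ} (hg : ∀ j, 0 < j → j < m → F (g j) = j / m)
    {δ : ℝ} (hδ : 0 ≤ δ) (hGg : ∀ j, 0 < j → j < m → |G (g j) - F (g j)| ≤ δ) (t : ℝ) :
    |G t - F t| ≤ δ + 1 / m :=
  abs_sub_le_iff.mpr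
    ⟨sub_le_of_grid hG (fun t => (hG01 t).2) hF hm hg hδ
      (fun j hj0 hjm => (abs_sub_le_iff.mp (hGg j hj0 hjm)).1) t (hF01 t).1,
     sub_le_of_grid' hG (fun t => (hG01 t).1) hF hm hg hδ
      (fun j hj0 hjm => (abs_sub_le_iff.mp (hGg j hj0 hjm)).2) t (hF01 t).2⟩

lemma exists_finset_iSup_abs_sub_le {F : ℝ → ℝ} (hFcont : Continuous F) (hFmono : Monotone F)
    (hF0 : Tendsto F atBot (𝓝 0)) (hF1 : Tendsto F atTop (𝓝 1)) {ε : ℝ} (hε : 0 < ε) :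
    ∃ S : Finset ℝ, ∀ G : ℝ → ℝ, Monotone G → (∀ t, G t ∈ Set.Icc 0 1) →
      ∀ δ, 0 ≤ δ → (∀ s ∈ S, |G s - F s| ≤ δ) → ⨆ t, |G t - F t| ≤ δ + ε := by
  obtain ⟨k, hk⟩ := exists_nat_one_div_lt hε
  have hlevels : ∀ j : ℕ, ∃ x, 0 < j → j < k + 1 → F x = j / (k + 1 : ℕ) := by
    intro j
    by_cases hj : 0 < j ∧ j < k + 1
    · have hpos : (0 : ℝ) < j / (k + 1 : ℕ) := by have := hj.1; positivity
      have hlt : (j : ℝ) / (k + 1 : ℕ) < 1 := by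
        rw [div_lt_one (by positivity)]; exact_mod_cast hj.2
      obtain ⟨x, hx⟩ := mem_range_of_exists_le_of_exists_ge hFcont
        (hF0.eventually (ge_mem_nhds hpos)).exists (hF1.eventually (le_mem_nhds hlt)).exists
      exact ⟨x, fun _ _ => hx⟩
    · exact ⟨0, fun h0 h1 => absurd ⟨h0, h1⟩ hj⟩
  choose g hg using hlevels
  refine ⟨(Finset.Ioo 0 (k + 1)).image g, fun G hG hG01 δ hδ hS => ciSup_le fun t => ?_⟩
  have hgrid := abs_sub_le_of_grid hG hG01 hFmono
    (fun t => ⟨hFmono.le_of_tendsto hF0 t, hFmono.ge_of_tendsto hF1 t⟩) k.succ_pos hg hδ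
    (fun j hj0 hjm => hS _ (Finset.mem_image_of_mem g (Finset.mem_Ioo.mpr ⟨hj0, hjm⟩))) t
  push_cast at hgrid ⊢
  linarith

section EmpiricalCDF

variable {Ω : Type*}

noncomputable def empiricalCDF (X : ℕ → Ω → ℝ) (n : ℕ) (ω : Ω) (t : ℝ) : ℝ :=
  (n : ℝ)⁻¹ * ∑ i ∈ Finset.range n, if X i ω ≤ t then 1 else 0

variable {X : ℕ → Ω → ℝ} {n : ℕ}

lemma empiricalCDF_eq_indicator (ω : Ω) (t : ℝ) :
    empiricalCDF X n ω t
      = (n : ℝ)⁻¹ * ∑ i ∈ Finset.range n, {ω | X i ω ≤ t}.indicator 1 ω := by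
  simp [empiricalCDF, Set.indicator_apply]

lemma empiricalCDF_nonneg (ω : Ω) (t : ℝ) : 0 ≤ empiricalCDF X n ω t :=
  mul_nonneg (by positivity) (Finset.sum_nonneg fun i _ => by split_ifs <;> norm_num)

lemma empiricalCDF_le_one (ω : Ω) (t : ℝ) : empiricalCDF X n ω t ≤ 1 := by
  rcases Nat.eq_zero_or_pos n with rfl | hn
  · simp [empiricalCDF]
  rw [empiricalCDF, inv_mul_le_one₀ (Nat.cast_pos.mpr hn)]
  calc ∑ i ∈ Finset.range n, (if X i ω ≤ t then (1 : ℝ) else 0)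
      ≤ ∑ _i ∈ Finset.range n, (1 : ℝ) := Finset.sum_le_sum fun i _ => by split_ifs <;> norm_num
    _ = n := by simp

lemma monotone_empiricalCDF (ω : Ω) : Monotone (empiricalCDF X n ω) := by
  intro s t hst
  refine mul_le_mul_of_nonneg_left (Finset.sum_le_sum fun i _ => ?_) (by positivity)
  by_cases hs : X i ω ≤ s
  · simp [hs, hs.trans hst]
  · simp only [hs, if_false]
    split_ifs <;> norm_num

end EmpiricalCDF

section Probability

variable {Ω : Type*} [MeasurableSpace Ω] {μ : Measure Ω}

lemma tendstoInMeasure_iSup_abs_sub {ι : Type*} {l : Filter ι} {G : ι → Ω → ℝ → ℝ}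
    {F : ℝ → ℝ} (hFcont : Continuous F) (hFmono : Monotone F)
    (hF0 : Tendsto F atBot (𝓝 0)) (hF1 : Tendsto F atTop (𝓝 1))
    (hG : ∀ i ω, Monotone (G i ω)) (hG01 : ∀ i ω t, G i ω t ∈ Set.Icc 0 1)
    (hconv : ∀ t, TendstoInMeasure μ (fun i ω => G i ω t) l (fun _ => F t)) :
    TendstoInMeasure μ (fun i ω => ⨆ t, |G i ω t - F t|) l (fun _ => 0) := by
  rw [tendstoInMeasure_iff_dist]
  intro ε hε
  obtain ⟨S, hS⟩ := exists_finset_iSup_abs_sub_le hFcont hFmono hF0 hF1 (half_pos hε)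
  have hsub : ∀ i, {ω | ε ≤ dist (⨆ t, |G i ω t - F t|) 0}
      ⊆ ⋃ s ∈ S, {ω | ε / 4 ≤ dist (G i ω s) (F s)} := by
    intro i ω hω
    by_contra hnot
    simp only [Set.mem_iUnion, Set.mem_ofPred_eq, not_exists, not_le, Real.dist_eq] at hnot
    have hsup := hS (G i ω) (hG i ω) (hG01 i ω) (ε / 4) (by positivity)
      fun s hs => (hnot s hs).le
    rw [Set.mem_ofPred_eq, Real.dist_eq, sub_zero,
      abs_of_nonneg (Real.iSup_nonneg fun t => abs_nonneg _)] at hω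
    linarith
  have hsum : Tendsto (fun i => ∑ s ∈ S, μ {ω | ε / 4 ≤ dist (G i ω s) (F s)}) l (𝓝 0) := by
    simpa using tendsto_finsetSum S fun s _ =>
      tendstoInMeasure_iff_dist.mp (hconv s) (ε / 4) (by positivity)
  exact tendsto_of_tendsto_of_tendsto_of_le_of_le tendsto_const_nhds hsum (fun _ => zero_le)
    fun i => (measure_mono (hsub i)).trans (measure_biUnion_finset_le _ _)


lemma tendstoInMeasure_of_tendsto_integral_sq [IsFiniteMeasure μ] {ι : Type*} {l : Filter ι}
    {f : ι → Ω → ℝ} {g : Ω → ℝ} (hf : ∀ i, MemLp (fun ω => f i ω - g ω) 2 μ)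
    (hlim : Tendsto (fun i => ∫ ω, (f i ω - g ω) ^ 2 ∂μ) l (𝓝 0)) :
    TendstoInMeasure μ f l g := by
  rw [tendstoInMeasure_iff_measureReal_dist]
  intro ε hε
  refine squeeze_zero (fun _ => measureReal_nonneg) (fun i => ?_)
    (by simpa using hlim.const_mul (ε ^ 2)⁻¹)
  calc μ.real {ω | ε ≤ dist (f i ω) (g ω)}
      ≤ μ.real {ω | ε ^ 2 ≤ (f i ω - g ω) ^ 2} := by
        refine measureReal_mono fun ω hω => ?_
        rw [Set.mem_ofPred_eq, Real.dist_eq] at hω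
        exact (pow_le_pow_left₀ hε.le hω 2).trans_eq (sq_abs _)
    _ ≤ (ε ^ 2)⁻¹ * ∫ ω, (f i ω - g ω) ^ 2 ∂μ := by
        rw [le_inv_mul_iff₀ (by positivity)]
        exact mul_meas_ge_le_integral_of_nonneg (ae_of_all _ fun _ => sq_nonneg _)
          (hf i).integrable_sq _

lemma integral_sum_indicator_sq [IsFiniteMeasure μ] {A : ℕ → Set Ω}
    (hA : ∀ i, MeasurableSet (A i)) (s : Finset ℕ) :
    ∫ ω, (∑ i ∈ s, (A i).indicator 1 ω) ^ 2 ∂μ = ∑ i ∈ s, ∑ j ∈ s, μ.real (A i ∩ A j) := by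
  have hsq : ∀ ω, (∑ i ∈ s, (A i).indicator (1 : Ω → ℝ) ω) ^ 2
      = ∑ i ∈ s, ∑ j ∈ s, (A i ∩ A j).indicator 1 ω := fun ω => by
    simp only [sq, Finset.sum_mul_sum, Set.inter_indicator_one, Pi.mul_apply]
  have hint : ∀ i j, Integrable ((A i ∩ A j).indicator (1 : Ω → ℝ)) μ :=
    fun i j => (integrable_const 1).indicator ((hA i).inter (hA j))
  simp_rw [hsq]
  rw [integral_finsetSum _ fun i _ => integrable_finsetSum _ fun j _ => hint i j]
  refine Finset.sum_congr rfl fun i _ => ?_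
  rw [integral_finsetSum _ fun j _ => hint i j]
  exact Finset.sum_congr rfl fun j _ => integral_indicator_one ((hA i).inter (hA j))

lemma integral_mean_indicator_sub_sq [IsProbabilityMeasure μ] {A : ℕ → Set Ω}
    (hA : ∀ i, MeasurableSet (A i)) {n : ℕ} (hn : n ≠ 0) {p q : ℝ}
    (hp : ∀ i < n, μ.real (A i) = p) (hq : ∀ i < n, ∀ j < n, i ≠ j → μ.real (A i ∩ A j) = q)
    (c : ℝ) :
    ∫ ω, ((n : ℝ)⁻¹ * ∑ i ∈ Finset.range n, (A i).indicator 1 ω - c) ^ 2 ∂μ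
      = (n : ℝ)⁻¹ * p + (1 - (n : ℝ)⁻¹) * q - 2 * c * p + c ^ 2 := by
  set S : Ω → ℝ := fun ω => ∑ i ∈ Finset.range n, (A i).indicator 1 ω
  have hS : MemLp S 2 μ :=
    memLp_finsetSum _ fun i _ => (memLp_const 1).indicator (hA i)
  have hS1 : ∫ ω, S ω ∂μ = n * p := by
    rw [integral_finsetSum _ fun i _ => (integrable_const 1).indicator (hA i),
      Finset.sum_congr rfl fun i hi => (integral_indicator_one (hA i)).trans
        (hp i (Finset.mem_range.mp hi)), Finset.sum_const, Finset.card_range, nsmul_eq_mul]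
  have hS2 : ∫ ω, S ω ^ 2 ∂μ = n * (n * q + (p - q)) := by
    have hdiag : ∀ i < n, ∀ j < n, μ.real (A i ∩ A j) = q + if j = i then p - q else 0 := by
      intro i hi j hj
      split_ifs with hji
      · rw [hji, Set.inter_self, hp i hi]; ring
      · rw [hq i hi j hj (Ne.symm hji), add_zero]
    rw [integral_sum_indicator_sq hA]
    simp_rw [Finset.sum_congr rfl fun i hi => Finset.sum_congr rfl fun j hj =>
      hdiag i (Finset.mem_range.mp hi) j (Finset.mem_range.mp hj)]
    simp only [Finset.sum_add_distrib, Finset.sum_ite_eq', Finset.sum_ite_mem, Finset.inter_self,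
      Finset.sum_const, Finset.card_range, nsmul_eq_mul]
    ring
  calc ∫ ω, ((n : ℝ)⁻¹ * S ω - c) ^ 2 ∂μ
      = ∫ ω, ((n : ℝ)⁻¹ ^ 2 * S ω ^ 2 - 2 * c * (n : ℝ)⁻¹ * S ω + c ^ 2) ∂μ := by
        congr 1; ext ω; ring
    _ = (n : ℝ)⁻¹ ^ 2 * ∫ ω, S ω ^ 2 ∂μ - 2 * c * (n : ℝ)⁻¹ * ∫ ω, S ω ∂μ + c ^ 2 := by
        have h2 := hS.integrable_sq.const_mul ((n : ℝ)⁻¹ ^ 2)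
        have h1 := (hS.integrable one_le_two).const_mul (2 * c * (n : ℝ)⁻¹)
        have h21 : Integrable (fun ω => (n : ℝ)⁻¹ ^ 2 * S ω ^ 2 - 2 * c * (n : ℝ)⁻¹ * S ω) μ :=
          h2.sub h1
        rw [integral_add h21 (integrable_const _), integral_sub h2 h1, integral_const_mul,
          integral_const_mul, integral_const, probReal_univ, one_smul]
    _ = _ := by
        rw [hS1, hS2]
        field_simp
        ring

variable {X : ℕ → Ω → ℝ} {n : ℕ}

lemma memLp_empiricalCDF [IsFiniteMeasure μ] (hX : ∀ i, Measurable (X i)) (t : ℝ) :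
    MemLp (fun ω => empiricalCDF X n ω t) 2 μ := by
  have hmeas : Measurable fun ω => empiricalCDF X n ω t :=
    (Finset.measurable_sum _ fun i _ =>
      Measurable.ite (hX i measurableSet_Iic) measurable_const measurable_const).const_mul _
  refine MemLp.of_bound hmeas.aestronglyMeasurable 1 (ae_of_all _ fun ω => ?_)
  rw [Real.norm_of_nonneg (empiricalCDF_nonneg ω t)]
  exact empiricalCDF_le_one ω t

open ProbabilityTheory in
lemma integral_empiricalCDF_sub_sq [IsProbabilityMeasure μ] (hX : ∀ i, Measurable (X i))
    (hn : n ≠ 0) (hident : ∀ i < n, μ.map (X i) = μ.map (X 0))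
    (hpair : ∀ i < n, ∀ j < n, i ≠ j →
      μ.map (fun ω => (X i ω, X j ω)) = μ.map (fun ω => (X 0 ω, X 1 ω)))
    (t c : ℝ) :
    ∫ ω, (empiricalCDF X n ω t - c) ^ 2 ∂μ
      = (n : ℝ)⁻¹ * μ.real {ω | X 0 ω ≤ t}
        + (1 - (n : ℝ)⁻¹) * μ.real {ω | X 0 ω ≤ t ∧ X 1 ω ≤ t}
        - 2 * c * μ.real {ω | X 0 ω ≤ t} + c ^ 2 := by
  simp_rw [empiricalCDF_eq_indicator]
  refine integral_mean_indicator_sub_sq (fun i => hX i measurableSet_Iic) hn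
    (fun i hi => ?_) (fun i hi j hj hij => ?_) c
  · exact congrArg ENNReal.toReal <|
      IdentDistrib.measure_mem_eq ⟨(hX i).aemeasurable, (hX 0).aemeasurable, hident i hi⟩
        measurableSet_Iic
  · exact congrArg ENNReal.toReal <|
      IdentDistrib.measure_mem_eq ⟨((hX i).prodMk (hX j)).aemeasurable,
        ((hX 0).prodMk (hX 1)).aemeasurable, hpair i hi j hj hij⟩
        (measurableSet_Iic.prod measurableSet_Iic)

lemma tendstoInMeasure_empiricalCDF [IsProbabilityMeasure μ] {R : ℕ → ℕ → Ω → ℝ}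
    (hmeas : ∀ n i, Measurable (R n i))
    (hident : ∀ n, ∀ i < n, μ.map (R n i) = μ.map (R n 0))
    (hpair : ∀ n, ∀ i < n, ∀ j < n, i ≠ j →
      μ.map (fun ω => (R n i ω, R n j ω)) = μ.map (fun ω => (R n 0 ω, R n 1 ω)))
    {t c : ℝ} (huniv : Tendsto (fun n => μ.real {ω | R n 0 ω ≤ t}) atTop (𝓝 c))
    (hbiv : Tendsto (fun n => μ.real {ω | R n 0 ω ≤ t ∧ R n 1 ω ≤ t}) atTop (𝓝 (c ^ 2))) :
    TendstoInMeasure μ (fun n ω => empiricalCDF (R n) n ω t) atTop (fun _ => c) := by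
  refine tendstoInMeasure_of_tendsto_integral_sq
    (fun n => (memLp_empiricalCDF (hmeas n) t).sub (memLp_const c)) ?_
  have hinv := tendsto_inv_atTop_nhds_zero_nat (𝕜 := ℝ)
  have hlim := (((hinv.mul huniv).add
    (((tendsto_const_nhds (x := (1 : ℝ))).sub hinv).mul hbiv)).sub
    (huniv.const_mul (2 * c))).add (tendsto_const_nhds (x := c ^ 2))
  rw [show 0 * c + (1 - 0) * c ^ 2 - 2 * c * c + c ^ 2 = 0 by ring] at hlim
  refine hlim.congr' ?_
  filter_upwards [eventually_ne_atTop 0] with n hn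
  exact (integral_empiricalCDF_sub_sq (hmeas n) hn (hident n) (hpair n) t c).symm

end Probability
/-- Uniform consistency of the empirical distribution function of a triangular array of
identically distributed (not necessarily independent) random variables, under pointwise
convergence of the univariate and bivariate marginals towards a continuous CDF `F`. -/
theorem empirical_cdf_uniform_consistency
    {Ω : Type*} [MeasurableSpace Ω] (μ : Measure Ω) [IsProbabilityMeasure μ]
    (R : ℕ → ℕ → Ω → ℝ)
    (hmeas : ∀ n i, Measurable (R n i))
    (hident : ∀ n, ∀ i < n, μ.map (R n i) = μ.map (R n 0))
    (hpair : ∀ n, ∀ i < n, ∀ j < n, i ≠ j →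
      μ.map (fun ω => (R n i ω, R n j ω)) = μ.map (fun ω => (R n 0 ω, R n 1 ω)))
    (F : ℝ → ℝ) (hFcont : Continuous F) (hFmono : Monotone F)
    (hF0 : Tendsto F atBot (𝓝 0)) (hF1 : Tendsto F atTop (𝓝 1))
    (huniv : ∀ t : ℝ, Tendsto (fun n => (μ {ω | R n 0 ω ≤ t}).toReal) atTop (𝓝 (F t)))
    (hbiv : ∀ t : ℝ, Tendsto (fun n => (μ {ω | R n 0 ω ≤ t ∧ R n 1 ω ≤ t}).toReal)
      atTop (𝓝 (F t ^ 2))) :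
    TendstoInMeasure μ
      (fun (n : ℕ) (ω : Ω) => ⨆ t : ℝ,
        |(n : ℝ)⁻¹ * ∑ i ∈ Finset.range n, (if R n i ω ≤ t then (1:ℝ) else 0) - F t|)
      atTop (fun _ => (0:ℝ)) :=
  tendstoInMeasure_iSup_abs_sub hFcont hFmono hF0 hF1
    (fun _ ω => monotone_empiricalCDF ω)
    (fun _ ω t => ⟨empiricalCDF_nonneg ω t, empiricalCDF_le_one ω t⟩)
    (fun t => tendstoInMeasure_empiricalCDF hmeas hident hpair (huniv t) (hbiv t))
end
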